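/- In an I×J table with I ≤ J, any set of I+J-1 cells that meets every row and every column and contains no k-cycle for any k ≥ 2 corresponds, as a bipartite graph on the I rows and J columns, to a spanning tree; in particular, a set of I+J-1 cells is a strictly minimal pattern for the independence model if and only if the associated bipartite graph (rows and columns as vertices, cells as edges) is a spanning tree of the complete bipartite graph K_{I,J}. -/

import Mathlib

/-!
Send the cell `(i, j)` to the vector `incVec (i, j) = e_i + e_j` on the `I + J` vertices of
`K_{I,J}`. All these vectors lie in the hyperplane where the row and column coordinates have equal
sums, and `designCol` is their image under a linear map that is injective on that hyperplane, so
the two families are independent together.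

If the cells form a connected graph, then walking along edges from a vertex `v₀` shows that their
incidence vectors together with `e_{v₀}` span everything, so `I + J - 1` of them are independent.
If `u` and `w` lie in different components, the functionals `x ↦ Σ ±x_v` (sign `+` on rows, `-` on
columns) over the component `P` of `u` and over its complement both vanish on every incidence
vector; independence of `I + J - 1` of them makes their span the hyperplane `ker φ_P`, which
contains `e_w`, but `φ_{Pᶜ}` does not vanish on `e_w`. A graph with `I + J - 1` edges on `I + J`
vertices is a tree exactly when it is connected.

A linear dependency, restricted to the cells with non-zero coefficient, has no row or column
containing only one of its cells, hence at most as many rows plus columns as cells. A minimal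
non-empty set of cells with this property meets each of its rows and columns in exactly two cells,
which is a `k`-cycle.
-/

def designCol (I J : ℕ) (c : Fin I × Fin J) : Unit ⊕ Fin (I - 1) ⊕ Fin (J - 1) → ℝ :=
  fun r => match r with
  | Sum.inl _ => 1
  | Sum.inr (Sum.inl a) => if (c.1 : ℕ) = (a : ℕ) then 1 else 0
  | Sum.inr (Sum.inr b) => if (c.2 : ℕ) = (b : ℕ) then 1 else 0

def IsKCycle {I J : ℕ} (k : ℕ) (C : Finset (Fin I × Fin J)) : Prop :=
  2 ≤ k ∧ C.card = 2 * k ∧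
    (C.image Prod.fst).card = k ∧ (C.image Prod.snd).card = k ∧
    (∀ i ∈ C.image Prod.fst, (C.filter fun c => c.1 = i).card = 2) ∧
    (∀ j ∈ C.image Prod.snd, (C.filter fun c => c.2 = j).card = 2)

def cellGraph {I J : ℕ} (S : Finset (Fin I × Fin J)) : SimpleGraph (Fin I ⊕ Fin J) where
  Adj u v := (∃ i j, u = Sum.inl i ∧ v = Sum.inr j ∧ (i, j) ∈ S) ∨
             (∃ i j, v = Sum.inl i ∧ u = Sum.inr j ∧ (i, j) ∈ S)
  symm := ⟨fun u v h => Or.symm h⟩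
  loopless := ⟨by rintro u (⟨i, j, rfl, h, -⟩ | ⟨i, j, rfl, h, -⟩) <;> simp at h⟩

open Finset Module Submodule

lemma Fin.eq_zero_of_sum_eq_zero_of_castLE {M : Type*} [AddCommMonoid M] {n : ℕ}
    {f : Fin n → M} (hsum : ∑ i, f i = 0)
    (hinit : ∀ a : Fin (n - 1), f (Fin.castLE (Nat.sub_le n 1) a) = 0) : f = 0 := by
  funext i
  by_cases hi : (i : ℕ) < n - 1
  · exact hinit ⟨i, hi⟩
  rw [Pi.zero_apply, ← hsum, Finset.sum_eq_single i (fun j _ hj => ?_) (by simp)]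
  exact hinit ⟨j, by have := j.isLt; have : (j : ℕ) ≠ i := Fin.val_ne_of_ne hj; omega⟩

section Fibers

variable {α γ : Type*} [DecidableEq γ] {f : α → γ} {T : Finset α}

lemma Finset.exists_ne_map_eq_of_card_image_le [DecidableEq α] {c : α} (hc : c ∈ T)
    (h : #(T.image f) ≤ #((T.erase c).image f)) : ∃ d ∈ T, d ≠ c ∧ f d = f c := by
  by_contra! hne
  refine h.not_gt <| card_lt_card <| (ssubset_iff_of_subset (image_subset_image
    (erase_subset c T))).2 ⟨f c, mem_image_of_mem f hc, fun hfc => ?_⟩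
  obtain ⟨d, hd, hdc⟩ := mem_image.1 hfc
  exact hne d (mem_of_mem_erase hd) (ne_of_mem_erase hd) hdc

lemma Finset.exists_ne_map_eq_of_sum_fiber_eq_zero {M : Type*} [AddCommMonoid M] {g : α → M}
    (hg : ∀ c ∈ T, g c ≠ 0) (hsum : ∀ x, ∑ a ∈ T with f a = x, g a = 0) :
    ∀ c ∈ T, ∃ d ∈ T, d ≠ c ∧ f d = f c := by
  intro c hc
  by_contra! h
  refine hg c hc ?_
  rw [← hsum (f c), sum_eq_single_of_mem c (by simp [hc])]
  intro d hd hdc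
  exact absurd (mem_filter.1 hd).2 (h d (mem_filter.1 hd).1 hdc)

lemma Finset.two_le_card_fiber (h : ∀ c ∈ T, ∃ d ∈ T, d ≠ c ∧ f d = f c) :
    ∀ x ∈ T.image f, 2 ≤ #{a ∈ T | f a = x} := by
  intro x hx
  obtain ⟨c, hc, rfl⟩ := mem_image.1 hx
  obtain ⟨d, hd, hdc, hfd⟩ := h c hc
  exact one_lt_card.2 ⟨c, by simp [hc], d, by simp [hd, hfd], hdc.symm⟩

lemma Finset.two_mul_card_image_le (h : ∀ x ∈ T.image f, 2 ≤ #{a ∈ T | f a = x}) :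
    2 * #(T.image f) ≤ #T := by
  rw [card_eq_sum_card_image f T, mul_comm, ← smul_eq_mul, ← sum_const]
  exact sum_le_sum h

lemma Finset.card_fiber_eq_two (h : ∀ x ∈ T.image f, 2 ≤ #{a ∈ T | f a = x})
    (hT : #T ≤ 2 * #(T.image f)) : ∀ x ∈ T.image f, #{a ∈ T | f a = x} = 2 := by
  refine fun x hx => ((sum_eq_sum_iff_of_le h).1 ?_ x hx).symm
  rw [← card_eq_sum_card_image, sum_const, smul_eq_mul]
  have hle := two_mul_card_image_le h
  omega

lemma Finset.card_eq_two_mul_card_image (h : ∀ x ∈ T.image f, #{a ∈ T | f a = x} = 2) :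
    #T = 2 * #(T.image f) := by
  rw [card_eq_sum_card_image f T, sum_congr rfl h, sum_const, smul_eq_mul, mul_comm]

end Fibers

lemma Finset.exists_subset_card_fiber_eq_two {α β : Type*} [DecidableEq α] [DecidableEq β]
    {T : Finset (α × β)} (hT : T.Nonempty)
    (hcount : #(T.image Prod.fst) + #(T.image Prod.snd) ≤ #T) :
    ∃ C ⊆ T, C.Nonempty ∧ (∀ i ∈ C.image Prod.fst, #{c ∈ C | c.1 = i} = 2) ∧
      (∀ j ∈ C.image Prod.snd, #{c ∈ C | c.2 = j} = 2) := by
  obtain ⟨C, ⟨hCT, hCne, hC⟩, hmin⟩ := wellFounded_lt.has_min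
    {C : Finset (α × β) | C ⊆ T ∧ C.Nonempty ∧ #(C.image Prod.fst) + #(C.image Prod.snd) ≤ #C}
    ⟨T, subset_rfl, hT, hcount⟩
  have hrows : 0 < #(C.image Prod.fst) := card_pos.2 (hCne.image _)
  have hcols : 0 < #(C.image Prod.snd) := card_pos.2 (hCne.image _)
  have herase : ∀ c ∈ C,
      #C ≤ #((C.erase c).image Prod.fst) + #((C.erase c).image Prod.snd) := by
    intro c hc
    by_contra! h
    refine hmin (C.erase c) ⟨(erase_subset c C).trans hCT, ?_, ?_⟩ (erase_ssubset hc)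
    · rw [← card_pos, card_erase_of_mem hc]; omega
    · rw [card_erase_of_mem hc]; omega
  have hrow_le (c : α × β) : #((C.erase c).image Prod.fst) ≤ #(C.image Prod.fst) :=
    card_le_card (image_subset_image (erase_subset c C))
  have hcol_le (c : α × β) : #((C.erase c).image Prod.snd) ≤ #(C.image Prod.snd) :=
    card_le_card (image_subset_image (erase_subset c C))
  have hrow2 := two_le_card_fiber fun c hc => exists_ne_map_eq_of_card_image_le (f := Prod.fst) hc
    (by have := herase c hc; have := hcol_le c; omega)
  have hcol2 := two_le_card_fiber fun c hc => exists_ne_map_eq_of_card_image_le (f := Prod.snd) hc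
    (by have := herase c hc; have := hrow_le c; omega)
  have hrow_card := two_mul_card_image_le hrow2
  have hcol_card := two_mul_card_image_le hcol2
  obtain ⟨c₀, hc₀⟩ := hCne
  have htight := herase c₀ hc₀
  have := hrow_le c₀
  have := hcol_le c₀
  exact ⟨C, hCT, ⟨c₀, hc₀⟩, card_fiber_eq_two hrow2 (by omega), card_fiber_eq_two hcol2 (by omega)⟩

namespace ContingencyTable

variable {I J : ℕ}

noncomputable def incVec (c : Fin I × Fin J) : Fin I ⊕ Fin J → ℝ :=
  Pi.single (Sum.inl c.1) 1 + Pi.single (Sum.inr c.2) 1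

def rowColSign : Fin I ⊕ Fin J → ℝ := Sum.elim 1 (-1)

lemma rowColSign_ne_zero (v : Fin I ⊕ Fin J) : rowColSign v ≠ 0 := by
  cases v <;> simp [rowColSign]

noncomputable def signedSum (P : Set (Fin I ⊕ Fin J)) : (Fin I ⊕ Fin J → ℝ) →ₗ[ℝ] ℝ :=
  ∑ v, P.indicator rowColSign v • LinearMap.proj v

lemma signedSum_apply (P : Set (Fin I ⊕ Fin J)) (x : Fin I ⊕ Fin J → ℝ) :
    signedSum P x = ∑ v, P.indicator rowColSign v * x v := by
  simp [signedSum]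

lemma signedSum_single (P : Set (Fin I ⊕ Fin J)) (v : Fin I ⊕ Fin J) :
    signedSum P (Pi.single v 1) = P.indicator rowColSign v := by
  simp [signedSum_apply, Pi.single_apply]

lemma signedSum_incVec {P : Set (Fin I ⊕ Fin J)} {c : Fin I × Fin J}
    (hP : Sum.inl c.1 ∈ P ↔ Sum.inr c.2 ∈ P) : signedSum P (incVec c) = 0 := by
  rw [incVec, map_add, signedSum_single, signedSum_single]
  by_cases h : Sum.inl c.1 ∈ P
  · simp [Set.indicator_of_mem h, Set.indicator_of_mem (hP.1 h), rowColSign]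
  · simp [Set.indicator_of_notMem h, Set.indicator_of_notMem (mt hP.2 h)]

lemma span_incVec_le_ker_signedSum {S : Finset (Fin I × Fin J)} {P : Set (Fin I ⊕ Fin J)}
    (hP : ∀ c ∈ S, Sum.inl c.1 ∈ P ↔ Sum.inr c.2 ∈ P) :
    span ℝ (Set.range fun c : S => incVec c.val) ≤ LinearMap.ker (signedSum P) :=
  span_le.2 <| Set.range_subset_iff.2 fun c => signedSum_incVec (hP c c.2)

noncomputable def designMap (I J : ℕ) :
    (Fin I ⊕ Fin J → ℝ) →ₗ[ℝ] (Unit ⊕ Fin (I - 1) ⊕ Fin (J - 1) → ℝ) :=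
  LinearMap.pi <| Sum.elim (fun _ => ∑ i, LinearMap.proj (Sum.inl i))
    (Sum.elim (fun a => LinearMap.proj (Sum.inl (Fin.castLE (Nat.sub_le I 1) a)))
      (fun b => LinearMap.proj (Sum.inr (Fin.castLE (Nat.sub_le J 1) b))))

lemma designMap_incVec (c : Fin I × Fin J) : designMap I J (incVec c) = designCol I J c := by
  funext r
  rcases r with _ | a | b
  · simp [designMap, incVec, designCol, Pi.single_apply]
  all_goals simp [designMap, incVec, designCol, Pi.single_apply, Fin.ext_iff, eq_comm]

lemma disjoint_ker_signedSum_univ_ker_designMap :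
    Disjoint (LinearMap.ker (signedSum (Set.univ : Set (Fin I ⊕ Fin J))))
      (LinearMap.ker (designMap I J)) := by
  refine disjoint_def.2 fun x hbal hx => ?_
  have hbal' : ∑ i, x (Sum.inl i) = ∑ j, x (Sum.inr j) := by
    simpa [signedSum_apply, rowColSign, Fintype.sum_sum_type, add_neg_eq_zero] using hbal
  have hsum : ∑ i, x (Sum.inl i) = 0 := by simpa [designMap] using congrFun hx (Sum.inl ())
  have hr := Fin.eq_zero_of_sum_eq_zero_of_castLE hsum fun a => by
    simpa [designMap] using congrFun hx (Sum.inr (Sum.inl a))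
  have hc := Fin.eq_zero_of_sum_eq_zero_of_castLE (hbal' ▸ hsum) fun b => by
    simpa [designMap] using congrFun hx (Sum.inr (Sum.inr b))
  funext v
  rcases v with i | j
  exacts [congrFun hr i, congrFun hc j]

lemma linearIndependent_designCol_iff (S : Finset (Fin I × Fin J)) :
    LinearIndependent ℝ (fun c : S => designCol I J c.val) ↔
      LinearIndependent ℝ (fun c : S => incVec c.val) := by
  simp_rw [← designMap_incVec]
  exact (designMap I J).linearIndependent_iff_of_disjoint <|
    disjoint_ker_signedSum_univ_ker_designMap.mono_left <|
      span_incVec_le_ker_signedSum fun _ _ => by simp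

section Connectivity

variable {S : Finset (Fin I × Fin J)}

lemma single_mem_of_reachable {W : Submodule ℝ (Fin I ⊕ Fin J → ℝ)}
    (hW : ∀ c ∈ S, incVec c ∈ W) {u v : Fin I ⊕ Fin J} (huv : (cellGraph S).Reachable u v)
    (hu : Pi.single u 1 ∈ W) : Pi.single v 1 ∈ W := by
  obtain ⟨p⟩ := huv
  induction p with
  | nil => exact hu
  | cons hadj _ ih =>
    apply ih
    rcases hadj with ⟨i, j, rfl, rfl, hc⟩ | ⟨i, j, rfl, rfl, hc⟩
    · simpa [incVec] using W.sub_mem (hW _ hc) hu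
    · simpa [incVec] using W.sub_mem (hW _ hc) hu

lemma card_le_finrank_span_incVec_add_one (hS : (cellGraph S).Connected) :
    I + J ≤ finrank ℝ (span ℝ (Set.range fun c : S => incVec c.val)) + 1 := by
  obtain ⟨v₀⟩ := hS.nonempty
  set W := span ℝ (Set.range fun c : S => incVec c.val)
  have htop : W ⊔ ℝ ∙ Pi.single v₀ 1 = ⊤ := by
    rw [eq_top_iff, ← (Pi.basisFun ℝ (Fin I ⊕ Fin J)).span_eq, span_le]
    rintro _ ⟨v, rfl⟩
    rw [Pi.basisFun_apply]
    refine single_mem_of_reachable (fun c hc => ?_) (hS.preconnected v₀ v)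
      (mem_sup_right (mem_span_singleton_self _))
    exact mem_sup_left (subset_span ⟨⟨c, hc⟩, rfl⟩)
  calc I + J = finrank ℝ (W ⊔ ℝ ∙ Pi.single v₀ 1 : Submodule ℝ _) := by
        rw [htop, finrank_top, Module.finrank_fintype_fun_eq_card, Fintype.card_sum,
          Fintype.card_fin, Fintype.card_fin]
    _ ≤ finrank ℝ W + finrank ℝ (ℝ ∙ (Pi.single v₀ 1 : Fin I ⊕ Fin J → ℝ)) :=
      finrank_add_le_finrank_add_finrank _ _
    _ ≤ finrank ℝ W + 1 := by
        rw [finrank_span_singleton (Pi.single_ne_zero_iff.2 one_ne_zero)]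

lemma linearIndependent_incVec_of_connected (hcard : #S + 1 = I + J)
    (hS : (cellGraph S).Connected) : LinearIndependent ℝ (fun c : S => incVec c.val) := by
  rw [linearIndependent_iff_card_eq_finrank_span, Fintype.card_coe]
  have hle := (finrank_range_le_card (R := ℝ) fun c : S => incVec c.val).trans_eq
    (Fintype.card_coe S)
  have hge := card_le_finrank_span_incVec_add_one hS
  unfold Set.finrank at hle ⊢
  omega

lemma connected_of_linearIndependent_incVec (hcard : #S + 1 = I + J)
    (hS : LinearIndependent ℝ (fun c : S => incVec c.val)) : (cellGraph S).Connected := by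
  obtain ⟨u₀⟩ : Nonempty (Fin I ⊕ Fin J) := by
    rw [← Fintype.card_pos_iff, Fintype.card_sum, Fintype.card_fin, Fintype.card_fin]; omega
  refine (SimpleGraph.connected_iff _).2 ⟨fun u w => ?_, ⟨u₀⟩⟩
  by_contra huw
  set P : Set (Fin I ⊕ Fin J) := {v | (cellGraph S).Reachable u v}
  have hP : ∀ c ∈ S, Sum.inl c.1 ∈ P ↔ Sum.inr c.2 ∈ P := fun c hc =>
    have hadj : (cellGraph S).Adj (Sum.inl c.1) (Sum.inr c.2) := Or.inl ⟨_, _, rfl, rfl, hc⟩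
    ⟨fun h => h.trans hadj.reachable, fun h => h.trans hadj.symm.reachable⟩
  have hspan : span ℝ (Set.range fun c : S => incVec c.val) = LinearMap.ker (signedSum P) := by
    refine eq_of_le_of_finrank_le (span_incVec_le_ker_signedSum hP) ?_
    have hu : Pi.single u 1 ∉ LinearMap.ker (signedSum P) := by
      simp [signedSum_single, P, rowColSign_ne_zero]
    have hlt := Submodule.finrank_lt fun h : LinearMap.ker (signedSum P) = ⊤ => hu (h ▸ mem_top)
    rw [finrank_span_eq_card hS]
    simp only [Module.finrank_fintype_fun_eq_card, Fintype.card_sum, Fintype.card_fin,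
      Fintype.card_coe] at hlt ⊢
    omega
  have hw : Pi.single w 1 ∈ span ℝ (Set.range fun c : S => incVec c.val) := by
    simp [hspan, signedSum_single, P, huw]
  have := span_incVec_le_ker_signedSum (P := Pᶜ) (fun c hc => not_congr (hP c hc)) hw
  simp [signedSum_single, P, huw, rowColSign_ne_zero] at this

lemma card_edgeSet_cellGraph :
    Nat.card (cellGraph S).edgeSet = #S := by
  rw [← Nat.card_eq_finsetCard]
  refine (Nat.card_eq_of_bijective (fun c : S => ⟨s(Sum.inl c.1.1, Sum.inr c.1.2),
    Or.inl ⟨_, _, rfl, rfl, c.2⟩⟩) ⟨fun c d h => ?_, ?_⟩).symm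
  · replace h := congrArg Subtype.val h
    simp only [Sym2.eq_iff, Sum.inl.injEq, Sum.inr.injEq, reduceCtorEq, and_false, or_false] at h
    exact Subtype.ext (Prod.ext h.1 h.2)
  · rintro ⟨e, he⟩
    induction e using Sym2.ind with
    | _ u v =>
    rw [SimpleGraph.mem_edgeSet] at he
    rcases he with ⟨i, j, rfl, rfl, hc⟩ | ⟨i, j, rfl, rfl, hc⟩
    · exact ⟨⟨_, hc⟩, rfl⟩
    · exact ⟨⟨_, hc⟩, Subtype.ext Sym2.eq_swap⟩

lemma isTree_cellGraph_iff_connected (hcard : #S + 1 = I + J) :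
    (cellGraph S).IsTree ↔ (cellGraph S).Connected := by
  rw [SimpleGraph.isTree_iff_connected_and_card, card_edgeSet_cellGraph, hcard,
    Nat.card_eq_fintype_card, Fintype.card_sum, Fintype.card_fin, Fintype.card_fin, eq_self,
    and_true]

lemma linearIndependent_incVec_iff_isTree (hcard : #S + 1 = I + J) :
    LinearIndependent ℝ (fun c : S => incVec c.val) ↔ (cellGraph S).IsTree := by
  rw [isTree_cellGraph_iff_connected hcard]
  exact ⟨connected_of_linearIndependent_incVec hcard, linearIndependent_incVec_of_connected hcard⟩

end Connectivity

lemma sum_smul_incVec_inl (S : Finset (Fin I × Fin J)) (g : Fin I × Fin J → ℝ) (i : Fin I) :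
    (∑ c ∈ S, g c • incVec c) (Sum.inl i) = ∑ c ∈ S with c.1 = i, g c := by
  simp [incVec, Finset.sum_apply, Pi.single_apply, sum_filter, eq_comm]

lemma sum_smul_incVec_inr (S : Finset (Fin I × Fin J)) (g : Fin I × Fin J → ℝ) (j : Fin J) :
    (∑ c ∈ S, g c • incVec c) (Sum.inr j) = ∑ c ∈ S with c.2 = j, g c := by
  simp [incVec, Finset.sum_apply, Pi.single_apply, sum_filter, eq_comm]

lemma isKCycle_of_card_fiber_eq_two {C : Finset (Fin I × Fin J)} (hC : C.Nonempty)
    (hrow : ∀ i ∈ C.image Prod.fst, #{c ∈ C | c.1 = i} = 2)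
    (hcol : ∀ j ∈ C.image Prod.snd, #{c ∈ C | c.2 = j} = 2) :
    IsKCycle #(C.image Prod.fst) C := by
  have hr := card_eq_two_mul_card_image hrow
  have hc := card_eq_two_mul_card_image hcol
  have hpos : 0 < #(C.image Prod.fst) := card_pos.2 (hC.image _)
  have hprod : #C ≤ #(C.image Prod.fst) * #(C.image Prod.snd) :=
    (card_le_card subset_product).trans_eq (card_product _ _)
  refine ⟨?_, hr, rfl, by omega, hrow, hcol⟩
  nlinarith

lemma exists_isKCycle_of_not_linearIndependent {S : Finset (Fin I × Fin J)}
    (h : ¬ LinearIndependent ℝ (fun c : S => incVec c.val)) :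
    ∃ k, 2 ≤ k ∧ ∃ C ⊆ S, IsKCycle k C := by
  obtain ⟨g, hg, c₀, hc₀S, hc₀⟩ :
      ∃ g : Fin I × Fin J → ℝ, ∑ c ∈ S, g c • incVec c = 0 ∧ ∃ c ∈ S, g c ≠ 0 := by
    simpa using mt (linearIndepOn_finset_iff (s := S) (v := incVec)).2 h
  set T := {c ∈ S | g c ≠ 0} with hT
  have hrow : ∀ i, ∑ c ∈ T with c.1 = i, g c = 0 := fun i => by
    rw [hT, filter_comm, sum_filter_ne_zero, ← sum_smul_incVec_inl, hg, Pi.zero_apply]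
  have hcol : ∀ j, ∑ c ∈ T with c.2 = j, g c = 0 := fun j => by
    rw [hT, filter_comm, sum_filter_ne_zero, ← sum_smul_incVec_inr, hg, Pi.zero_apply]
  have hgT : ∀ c ∈ T, g c ≠ 0 := fun c hc => (mem_filter.1 hc).2
  have hrows :=
    two_mul_card_image_le (two_le_card_fiber (exists_ne_map_eq_of_sum_fiber_eq_zero hgT hrow))
  have hcols :=
    two_mul_card_image_le (two_le_card_fiber (exists_ne_map_eq_of_sum_fiber_eq_zero hgT hcol))
  obtain ⟨C, hCT, hCne, hCrow, hCcol⟩ :=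
    exists_subset_card_fiber_eq_two (T := T) ⟨c₀, mem_filter.2 ⟨hc₀S, hc₀⟩⟩ (by omega)
  have hC := isKCycle_of_card_fiber_eq_two hCne hCrow hCcol
  exact ⟨_, hC.1, C, hCT.trans (filter_subset _ _), hC⟩

end ContingencyTable

open ContingencyTable

theorem stmt8_general (I J : ℕ) (hI : 1 ≤ I)
    (S : Finset (Fin I × Fin J)) (hcard : S.card = I + J - 1) :
    (((∀ i : Fin I, ∃ j : Fin J, (i, j) ∈ S) ∧
      (∀ j : Fin J, ∃ i : Fin I, (i, j) ∈ S) ∧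
      (∀ k, 2 ≤ k → ∀ C ⊆ S, ¬ IsKCycle k C)) → (cellGraph S).IsTree) ∧
    (LinearIndependent ℝ (fun c : S => designCol I J c.val) ↔ (cellGraph S).IsTree) := by
  have hcard' : #S + 1 = I + J := by omega
  rw [linearIndependent_designCol_iff, linearIndependent_incVec_iff_isTree hcard']
  refine ⟨fun ⟨_, _, hno_cycle⟩ => (linearIndependent_incVec_iff_isTree hcard').1 ?_, Iff.rfl⟩
  by_contra h
  obtain ⟨k, hk, C, hCS, hC⟩ := exists_isKCycle_of_not_linearIndependent h
  exact hno_cycle k hk C hCS hC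

theorem stmt8 (I J : ℕ) (hI : 1 ≤ I) (hIJ : I ≤ J)
    (S : Finset (Fin I × Fin J)) (hcard : S.card = I + J - 1) :
    (((∀ i : Fin I, ∃ j : Fin J, (i, j) ∈ S) ∧
      (∀ j : Fin J, ∃ i : Fin I, (i, j) ∈ S) ∧
      (∀ k, 2 ≤ k → ∀ C ⊆ S, ¬ IsKCycle k C)) → (cellGraph S).IsTree) ∧
    (LinearIndependent ℝ (fun c : S => designCol I J c.val) ↔ (cellGraph S).IsTree) :=
  stmt8_general I J hI S hcard
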